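/- Let Γ be a groupoid, R an object unital Γ-graded ring, S a Γ₀-simple Γ-graded right R-module, and D := END_R(S). Then: (1) D is a gr-division ring; (2) for e, f ∈ Γ₀ with S(e) ≠ 0 and S(f) ≠ 0, there exists γ ∈ Γ with r(γ) = e, d(γ) = f and D_γ ≠ 0 if and only if S(e) and S(f) are in the same isoshift class; (3) D is gr-prime if and only if all the modules S(e) with S(e) ≠ 0 lie in a single isoshift class. -/

import Mathlib

set_option autoImplicit false

noncomputable section

universe u v w x y

/-- A groupoid structure on its set `Γ` of morphisms.  Objects are identified with
the identity morphisms: `src γ` and `tgt γ` are the source and target identities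
(`d(γ)` and `r(γ)`), and `comp γ δ h` is the composite `γδ`, which is defined
exactly when `src γ = tgt δ`. -/
structure Gpd (Γ : Type u) where
  src : Γ → Γ
  tgt : Γ → Γ
  inv : Γ → Γ
  comp : (γ δ : Γ) → src γ = tgt δ → Γ
  src_src : ∀ γ, src (src γ) = src γ
  tgt_src : ∀ γ, tgt (src γ) = src γ
  src_tgt : ∀ γ, src (tgt γ) = tgt γ
  tgt_tgt : ∀ γ, tgt (tgt γ) = tgt γ
  src_comp : ∀ γ δ (h : src γ = tgt δ), src (comp γ δ h) = src δ
  tgt_comp : ∀ γ δ (h : src γ = tgt δ), tgt (comp γ δ h) = tgt γ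
  comp_id : ∀ γ, comp γ (src γ) (tgt_src γ).symm = γ
  id_comp : ∀ γ, comp (tgt γ) γ (src_tgt γ) = γ
  comp_assoc : ∀ γ δ ε (h₁ : src γ = tgt δ) (h₂ : src δ = tgt ε),
    comp (comp γ δ h₁) ε ((src_comp γ δ h₁).trans h₂)
      = comp γ (comp δ ε h₂) (h₁.trans (tgt_comp δ ε h₂).symm)
  src_inv : ∀ γ, src (inv γ) = tgt γ
  tgt_inv : ∀ γ, tgt (inv γ) = src γ
  inv_inv : ∀ γ, inv (inv γ) = γ
  comp_inv : ∀ γ, comp γ (inv γ) (tgt_inv γ).symm = tgt γ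
  inv_comp : ∀ γ, comp (inv γ) γ (src_inv γ) = src γ

namespace Gpd

variable {Γ : Type u} (G : Gpd Γ)

/-- `e` is an object of the groupoid, i.e. an identity morphism. -/
def IsObj (e : Γ) : Prop := G.src e = e

open scoped Classical in
/-- Partial composition: `some (γδ)` when defined, `none` otherwise. -/
def mul? (γ δ : Γ) : Option Γ :=
  if h : G.src γ = G.tgt δ then some (G.comp γ δ h) else none

/-- The partial triple product `σ γ τ⁻¹`, `none` when undefined. -/
def conj? (σ γ τ : Γ) : Option Γ :=
  (G.mul? σ γ).bind fun η => G.mul? η (G.inv τ)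

end Gpd

/-- An object unital `Γ`-graded ring structure on the (possibly non-unital) ring `R`:
a decomposition `R = ⊕ R_γ` with `R_γ R_δ ⊆ R_{γδ}` (zero when `γδ` is undefined),
together with local units `1_e ∈ R_e` for the objects `e` such that
`1_{r(γ)} a = a 1_{d(γ)} = a` for homogeneous `a` of degree `γ`. -/
structure GammaRing {Γ : Type u} (G : Gpd Γ) (R : Type v) [NonUnitalRing R] where
  grade : Γ → AddSubgroup R
  grade_iSup : (⨆ γ : Γ, grade γ) = ⊤
  grade_indep : ∀ γ : Γ, grade γ ⊓ (⨆ (δ : Γ) (_ : δ ≠ γ), grade δ) = ⊥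
  mul_mem : ∀ (γ δ : Γ) (h : G.src γ = G.tgt δ) (a b : R),
    a ∈ grade γ → b ∈ grade δ → a * b ∈ grade (G.comp γ δ h)
  mul_ne : ∀ (γ δ : Γ), G.src γ ≠ G.tgt δ → ∀ (a b : R),
    a ∈ grade γ → b ∈ grade δ → a * b = 0
  one : Γ → R
  one_mem : ∀ e : Γ, G.IsObj e → one e ∈ grade e
  one_mul' : ∀ (γ : Γ) (a : R), a ∈ grade γ → one (G.tgt γ) * a = a
  mul_one' : ∀ (γ : Γ) (a : R), a ∈ grade γ → a * one (G.src γ) = a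

/-- A (unital) `Γ`-graded right module over the object unital `Γ`-graded ring `RG`. -/
structure GammaMod {Γ : Type u} {G : Gpd Γ} {R : Type v} [NonUnitalRing R]
    (RG : GammaRing G R) (M : Type w) [AddCommGroup M] where
  smul : M → R → M
  smul_add : ∀ (m : M) (a b : R), smul m (a + b) = smul m a + smul m b
  add_smul : ∀ (m n : M) (a : R), smul (m + n) a = smul m a + smul n a
  smul_mul : ∀ (m : M) (a b : R), smul m (a * b) = smul (smul m a) b
  grade : Γ → AddSubgroup M
  grade_iSup : (⨆ γ : Γ, grade γ) = ⊤
  grade_indep : ∀ γ : Γ, grade γ ⊓ (⨆ (δ : Γ) (_ : δ ≠ γ), grade δ) = ⊥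
  smul_mem : ∀ (σ τ : Γ) (h : G.src σ = G.tgt τ) (m : M) (a : R),
    m ∈ grade σ → a ∈ RG.grade τ → smul m a ∈ grade (G.comp σ τ h)
  smul_ne : ∀ (σ τ : Γ), G.src σ ≠ G.tgt τ → ∀ (m : M) (a : R),
    m ∈ grade σ → a ∈ RG.grade τ → smul m a = 0
  smul_one : ∀ (σ : Γ) (m : M), m ∈ grade σ → smul m (RG.one (G.src σ)) = m

/-- A (unital) `Γ`-graded left module over the object unital `Γ`-graded ring `RG`. -/
structure GammaLMod {Γ : Type u} {G : Gpd Γ} {R : Type v} [NonUnitalRing R]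
    (RG : GammaRing G R) (M : Type w) [AddCommGroup M] where
  smul : R → M → M
  smul_add : ∀ (a : R) (m n : M), smul a (m + n) = smul a m + smul a n
  add_smul : ∀ (a b : R) (m : M), smul (a + b) m = smul a m + smul b m
  mul_smul : ∀ (a b : R) (m : M), smul (a * b) m = smul a (smul b m)
  grade : Γ → AddSubgroup M
  grade_iSup : (⨆ γ : Γ, grade γ) = ⊤
  grade_indep : ∀ γ : Γ, grade γ ⊓ (⨆ (δ : Γ) (_ : δ ≠ γ), grade δ) = ⊥
  smul_mem : ∀ (τ σ : Γ) (h : G.src τ = G.tgt σ) (a : R) (m : M),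
    a ∈ RG.grade τ → m ∈ grade σ → smul a m ∈ grade (G.comp τ σ h)
  smul_ne : ∀ (τ σ : Γ), G.src τ ≠ G.tgt σ → ∀ (a : R) (m : M),
    a ∈ RG.grade τ → m ∈ grade σ → smul a m = 0
  one_smul : ∀ (σ : Γ) (m : M), m ∈ grade σ → smul (RG.one (G.tgt σ)) m = m

namespace GammaMod

variable {Γ : Type u} {G : Gpd Γ} {R : Type v} [NonUnitalRing R] {RG : GammaRing G R}
  {M : Type w} [AddCommGroup M] (Mod : GammaMod RG M)

/-- `shiftGrade σ γ` is the homogeneous component `M_{σγ}` (zero when undefined):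
the degree-`γ` component of the shifted module `M(σ)`. -/
def shiftGrade (σ γ : Γ) : AddSubgroup M := (G.mul? σ γ).elim ⊥ Mod.grade

/-- `N` is a graded submodule of `M`. -/
def IsGradedSub (N : AddSubgroup M) : Prop :=
  (∀ m ∈ N, ∀ a : R, Mod.smul m a ∈ N) ∧ N ≤ ⨆ γ : Γ, (Mod.grade γ ⊓ N)

/-- `N` is a gr-simple graded submodule of `M`. -/
def IsGrSimpleSub (N : AddSubgroup M) : Prop :=
  Mod.IsGradedSub N ∧ N ≠ ⊥ ∧
    ∀ P : AddSubgroup M, Mod.IsGradedSub P → P ≤ N → P = ⊥ ∨ P = N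

/-- `M` is a gr-simple graded module. -/
def IsGrSimple : Prop := Mod.IsGrSimpleSub ⊤

/-- `M` is a gr-semisimple graded module: it is the sum of its gr-simple graded
submodules. -/
def IsGrSemisimple : Prop :=
  (⨆ (N : AddSubgroup M) (_ : Mod.IsGrSimpleSub N), N) = ⊤

/-- The submodule `M(e) = ⊕_{r(γ) = e} M_γ`. -/
def eComp (e : Γ) : AddSubgroup M := ⨆ (γ : Γ) (_ : G.tgt γ = e), Mod.grade γ

/-- `M` is `Γ₀`-artinian: each `M(e)` satisfies the descending chain condition on
graded submodules. -/
def IsGamma0Artinian : Prop :=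
  ∀ e : Γ, G.IsObj e → ∀ f : ℕ → AddSubgroup M,
    (∀ n, Mod.IsGradedSub (f n) ∧ f n ≤ Mod.eComp e) →
    (∀ n, f (n + 1) ≤ f n) → ∃ n, ∀ k, n ≤ k → f k = f n

/-- `M` is a (nonzero) `Γ₀`-simple module: `M(e)` is gr-simple for every `e ∈ Γ'₀(M)`. -/
def IsGamma0Simple : Prop :=
  (∃ m : M, m ≠ 0) ∧
    ∀ e : Γ, G.IsObj e → Mod.eComp e ≠ ⊥ → Mod.IsGrSimpleSub (Mod.eComp e)

theorem isGradedSub_top : Mod.IsGradedSub (⊤ : AddSubgroup M) := by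
  constructor
  · intro m _ a
    exact AddSubgroup.mem_top _
  · have h : (⨆ γ : Γ, (Mod.grade γ ⊓ (⊤ : AddSubgroup M))) = (⊤ : AddSubgroup M) := by
      simp [Mod.grade_iSup]
    rw [h]

/-- `HomGrade γ` is the homogeneous component `HOM_R(M,M)_γ` of the graded
endomorphism ring `END_R(M)`: the `R`-linear additive endomorphisms `g` with
`g(M_σ) ⊆ M_{γσ}` for all `σ`. -/
def HomGrade (γ : Γ) : Set (M →+ M) :=
  {g | (∀ (m : M) (a : R), g (Mod.smul m a) = Mod.smul (g m) a) ∧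
       ∀ (σ : Γ) (m : M), m ∈ Mod.grade σ → g m ∈ Mod.shiftGrade γ σ}

/-- The graded submodule `N` of `M` is gr-isomorphic to a shift of the graded
submodule `N'` of `M₂`: there are `σ ∈ Γ` and a gr-isomorphism `N ≅ N'(σ)`. -/
def SubIso {M₂ : Type x} [AddCommGroup M₂] (Mod₂ : GammaMod RG M₂)
    (N : AddSubgroup M) (N' : AddSubgroup M₂) (hN : Mod.IsGradedSub N) : Prop :=
  ∃ (σ : Γ) (ψ : N ≃+ N'),
    (∀ (n : N) (a : R),
      ((ψ ⟨Mod.smul n.1 a, hN.1 n.1 n.2 a⟩ : N') : M₂) = Mod₂.smul ((ψ n : N') : M₂) a) ∧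
    ∀ γ : Γ, (fun n : N => ((ψ n : N') : M₂)) '' {n : N | (n : M) ∈ Mod.grade γ}
      = {m : M₂ | m ∈ N' ∧ m ∈ Mod₂.shiftGrade σ γ}

variable {ι : Type y}

/-- A pseudo-linearly independent sequence of homogeneous elements. -/
def PseudoLI (β : ι → Γ) (v : ι → M) : Prop :=
  (∀ i, v i ∈ Mod.grade (β i) ∧ v i ≠ 0) ∧
  ∀ a : ι →₀ R, (∀ i, RG.one (G.src (β i)) * a i = a i) →
    (a.sum fun i r => Mod.smul (v i) r) = 0 → a = 0

/-- A pseudo-basis of `M`: a generating pseudo-linearly independent sequence of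
homogeneous elements. -/
def PseudoBasis (β : ι → Γ) (v : ι → M) : Prop :=
  Mod.PseudoLI β v ∧
    AddSubgroup.closure {m : M | ∃ (i : ι) (r : R), m = Mod.smul (v i) r} = ⊤

/-- `M` is pseudo-free: it has a pseudo-basis. -/
def PseudoFree : Prop :=
  ∃ (κ : Type (max u w)) (β : κ → Γ) (v : κ → M), Mod.PseudoBasis β v

end GammaMod

namespace GammaLMod

variable {Γ : Type u} {G : Gpd Γ} {R : Type v} [NonUnitalRing R] {RG : GammaRing G R}
  {M : Type w} [AddCommGroup M] (Mod : GammaLMod RG M)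

/-- `rshiftGrade σ γ` is the homogeneous component `M_{σγ}` (zero when undefined). -/
def rshiftGrade (σ γ : Γ) : AddSubgroup M := (G.mul? σ γ).elim ⊥ Mod.grade

/-- `N` is a graded left submodule of `M`. -/
def IsGradedSub (N : AddSubgroup M) : Prop :=
  (∀ m ∈ N, ∀ a : R, Mod.smul a m ∈ N) ∧ N ≤ ⨆ γ : Γ, (Mod.grade γ ⊓ N)

def IsGrSimpleSub (N : AddSubgroup M) : Prop :=
  Mod.IsGradedSub N ∧ N ≠ ⊥ ∧
    ∀ P : AddSubgroup M, Mod.IsGradedSub P → P ≤ N → P = ⊥ ∨ P = N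

def IsGrSimple : Prop := Mod.IsGrSimpleSub ⊤

def IsGrSemisimple : Prop :=
  (⨆ (N : AddSubgroup M) (_ : Mod.IsGrSimpleSub N), N) = ⊤

/-- The left submodule `(e)M = ⊕_{d(γ) = e} M_γ`. -/
def lComp (e : Γ) : AddSubgroup M := ⨆ (γ : Γ) (_ : G.src γ = e), Mod.grade γ

def IsGamma0Artinian : Prop :=
  ∀ e : Γ, G.IsObj e → ∀ f : ℕ → AddSubgroup M,
    (∀ n, Mod.IsGradedSub (f n) ∧ f n ≤ Mod.lComp e) →
    (∀ n, f (n + 1) ≤ f n) → ∃ n, ∀ k, n ≤ k → f k = f n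

/-- `V` has finite `Γ₀`-dimension: each `(e)V` has a finite pseudo-basis. -/
def FiniteGamma0Dim : Prop :=
  ∀ e : Γ, G.IsObj e → ∃ (n : ℕ) (γs : Fin n → Γ) (u : Fin n → M),
    (∀ i, G.src (γs i) = e ∧ u i ∈ Mod.grade (γs i) ∧ u i ≠ 0) ∧
    (∀ m ∈ Mod.lComp e,
      m ∈ AddSubgroup.closure {y : M | ∃ (i : Fin n) (a : R), y = Mod.smul a (u i)}) ∧
    ∀ a : Fin n → R, (∀ i, a i * RG.one (G.tgt (γs i)) = a i) →
      (∑ i, Mod.smul (a i) (u i)) = 0 → ∀ i, a i = 0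

end GammaLMod

namespace GammaRing

variable {Γ : Type u} {G : Gpd Γ} {R : Type v} [NonUnitalRing R] (RG : GammaRing G R)

/-- The (right) regular graded module `R_R`. -/
def regular : GammaMod RG R where
  smul := fun m a => m * a
  smul_add := fun m a b => mul_add m a b
  add_smul := fun m n a => add_mul m n a
  smul_mul := fun m a b => (mul_assoc m a b).symm
  grade := RG.grade
  grade_iSup := RG.grade_iSup
  grade_indep := RG.grade_indep
  smul_mem := RG.mul_mem
  smul_ne := RG.mul_ne
  smul_one := RG.mul_one'

/-- The left regular graded module `_R R`. -/
def leftRegular : GammaLMod RG R where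
  smul := fun a m => a * m
  smul_add := fun a m n => mul_add a m n
  add_smul := fun a b m => add_mul a b m
  mul_smul := fun a b m => mul_assoc a b m
  grade := RG.grade
  grade_iSup := RG.grade_iSup
  grade_indep := RG.grade_indep
  smul_mem := RG.mul_mem
  smul_ne := RG.mul_ne
  one_smul := RG.one_mul'

/-- `I` is a graded (two-sided) ideal of `R`. -/
def IsGradedIdeal (I : AddSubgroup R) : Prop :=
  (∀ a ∈ I, ∀ r : R, a * r ∈ I ∧ r * a ∈ I) ∧ I ≤ ⨆ γ : Γ, (RG.grade γ ⊓ I)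

/-- `R` is a gr-simple ring. -/
def IsGrSimpleRing : Prop :=
  (∃ a : R, a ≠ 0) ∧ ∀ I : AddSubgroup R, RG.IsGradedIdeal I → I = ⊥ ∨ I = ⊤

/-- `R` is a gr-prime ring. -/
def IsGrPrime : Prop :=
  (∃ a : R, a ≠ 0) ∧ ∀ I J : AddSubgroup R, RG.IsGradedIdeal I → RG.IsGradedIdeal J →
    I ≠ ⊥ → J ≠ ⊥ → ∃ a ∈ I, ∃ b ∈ J, a * b ≠ 0

/-- `R` is a `Γ`-graded division ring: `R ≠ 0` and every nonzero homogeneous element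
of degree `γ` has an inverse of degree `γ⁻¹`. -/
def IsGrDivision : Prop :=
  (∃ a : R, a ≠ 0) ∧ ∀ (γ : Γ) (a : R), a ∈ RG.grade γ → a ≠ 0 →
    ∃ b ∈ RG.grade (G.inv γ), a * b = RG.one (G.tgt γ) ∧ b * a = RG.one (G.src γ)

/-- `supp(R) ⊆ eΓe`. -/
def SuppLE (e : Γ) : Prop := ∀ γ : Γ, RG.grade γ ≠ ⊥ → G.src γ = e ∧ G.tgt γ = e

def IsRightGrSemisimple : Prop := RG.regular.IsGrSemisimple

def IsLeftGrSemisimple : Prop := RG.leftRegular.IsGrSemisimple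

def IsRightGamma0Artinian : Prop := RG.regular.IsGamma0Artinian

def IsLeftGamma0Artinian : Prop := RG.leftRegular.IsGamma0Artinian

/-- The component ring `R_e` is a division ring with identity `1_e`. -/
def ComponentDivisionRing (e : Γ) : Prop :=
  RG.one e ≠ 0 ∧ ∀ a ∈ RG.grade e, a ≠ 0 →
    ∃ b ∈ RG.grade e, a * b = RG.one e ∧ b * a = RG.one e

/-- The additive subgroup `N` of `R` is, with the induced structure, a gr-simple
graded ring. -/
def SubringGrSimple (N : AddSubgroup R) : Prop :=
  N ≠ ⊥ ∧ ∀ P : AddSubgroup R,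
    (P ≤ N ∧ (∀ p ∈ P, ∀ n ∈ N, p * n ∈ P ∧ n * p ∈ P) ∧
      P ≤ ⨆ γ : Γ, (RG.grade γ ⊓ P)) →
    P = ⊥ ∨ P = N

/-- The additive subgroup `N` of `R` is, with the induced structure, a gr-prime
graded ring. -/
def SubringGrPrime (N : AddSubgroup R) : Prop :=
  (∃ a ∈ N, a ≠ 0) ∧ ∀ P Q : AddSubgroup R,
    (P ≤ N ∧ (∀ p ∈ P, ∀ n ∈ N, p * n ∈ P ∧ n * p ∈ P) ∧
      P ≤ ⨆ γ : Γ, (RG.grade γ ⊓ P)) →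
    (Q ≤ N ∧ (∀ q ∈ Q, ∀ n ∈ N, q * n ∈ Q ∧ n * q ∈ Q) ∧
      Q ≤ ⨆ γ : Γ, (RG.grade γ ⊓ Q)) →
    P ≠ ⊥ → Q ≠ ⊥ → ∃ p ∈ P, ∃ q ∈ Q, p * q ≠ 0

/-- The additive subgroup `N` of `R` is, with the induced structure, a graded
division ring. -/
def SubringGrDivision (N : AddSubgroup R) : Prop :=
  (∃ a ∈ N, a ≠ 0) ∧ ∀ (γ : Γ) (a : R), a ∈ RG.grade γ → a ∈ N → a ≠ 0 →
    RG.one (G.tgt γ) ∈ N ∧ RG.one (G.src γ) ∈ N ∧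
    ∃ b ∈ RG.grade (G.inv γ), b ∈ N ∧ a * b = RG.one (G.tgt γ) ∧ b * a = RG.one (G.src γ)

/-- The additive subgroup `N` of `R` is, with the induced structure, a right
`Γ₀`-artinian graded ring. -/
def SubringRightGamma0Artinian (N : AddSubgroup R) : Prop :=
  ∀ e : Γ, G.IsObj e → ∀ f : ℕ → AddSubgroup R,
    (∀ n, f n ≤ N ⊓ RG.regular.eComp e ∧ (∀ p ∈ f n, ∀ x ∈ N, p * x ∈ f n) ∧
      f n ≤ ⨆ γ : Γ, (RG.grade γ ⊓ f n)) →
    (∀ n, f (n + 1) ≤ f n) → ∃ n, ∀ k, n ≤ k → f k = f n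

end GammaRing

/-- A bundled object unital `Γ`-graded ring. -/
structure BRing.{u', v'} {Γ : Type u'} (G : Gpd Γ) where
  carrier : Type v'
  [ring : NonUnitalRing carrier]
  str : GammaRing G carrier

attribute [instance] BRing.ring

/-- A bundled `Γ`-graded right module over `RG`. -/
structure BMod.{u', v', w'} {Γ : Type u'} {G : Gpd Γ} {R : Type v'} [NonUnitalRing R]
    (RG : GammaRing G R) where
  carrier : Type w'
  [acg : AddCommGroup carrier]
  str : GammaMod RG carrier

attribute [instance] BMod.acg

/-- Two bundled graded modules are in the same isoshift class. -/
def BModSameClass {Γ : Type u} {G : Gpd Γ} {R : Type v} [NonUnitalRing R]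
    {RG : GammaRing G R} (S T : BMod.{u, v, w} RG) : Prop :=
  S.str.SubIso T.str ⊤ ⊤ S.str.isGradedSub_top

/-- The isoshiftical component of `R` of the type of the graded module `S`:
the sum of all graded right ideals of `R` which are gr-simple and lie in the
isoshift class of `S`. -/
def GammaRing.isoComponent {Γ : Type u} {G : Gpd Γ} {R : Type v} [NonUnitalRing R]
    (RG : GammaRing G R) (S : BMod.{u, v, w} RG) : AddSubgroup R :=
  ⨆ (N : AddSubgroup R) (_ : RG.regular.IsGrSimpleSub N ∧
      ∃ hN : RG.regular.IsGradedSub N, RG.regular.SubIso S.str N ⊤ hN), N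

/-- `R` is a pseudo-free module ring: every `Γ`-graded right `R`-module is
pseudo-free. -/
def GammaRing.IsPfm.{u', v', w'} {Γ : Type u'} {G : Gpd Γ} {R : Type v'}
    [NonUnitalRing R] (RG : GammaRing G R) : Prop :=
  ∀ S : BMod.{u', v', w'} RG, S.str.PseudoFree

/-- `R` has invariant pseudo-basis number: any two pseudo-bases of a finitely
generated pseudo-free graded module have the same number of elements. -/
def GammaRing.IPBN.{u', v', w'} {Γ : Type u'} {G : Gpd Γ} {R : Type v'}
    [NonUnitalRing R] (RG : GammaRing G R) : Prop :=
  ∀ (S : BMod.{u', v', w'} RG) (m n : ℕ) (β₁ : Fin m → Γ) (v₁ : Fin m → S.carrier)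
    (β₂ : Fin n → Γ) (v₂ : Fin n → S.carrier),
    S.str.PseudoBasis β₁ v₁ → S.str.PseudoBasis β₂ v₂ → m = n

/-- A `d`-finite sequence of elements of `eΓ`. -/
def DFiniteSeq {Γ : Type u} (G : Gpd Γ) {I : Type w} (e : Γ) (σ : I → Γ) : Prop :=
  (∀ i, G.tgt (σ i) = e) ∧ ∀ f : Γ, {i : I | G.src (σ i) = f}.Finite

/-- The degree-`γ` constraint on the `(i,j)` entry of a homogeneous matrix:
the component `D_{σ_i γ σ_j⁻¹}` (zero when the product is undefined). -/
def entryGrade {Γ : Type u} (G : Gpd Γ) {D : Type v} [NonUnitalRing D]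
    (DG : GammaRing G D) {I : Type w} (σ : I → Γ) (γ : Γ) (i j : I) : AddSubgroup D :=
  (G.conj? (σ i) γ (σ j)).elim ⊥ DG.grade

/-- The `(i,j)` entry of the product of two finitely supported matrices. -/
def matMulEntry {I : Type w} {D : Type v} [NonUnitalRing D]
    (A B : I →₀ I →₀ D) (i j : I) : D :=
  (A i).sum fun k a => a * B k j

/-- `R` is gr-isomorphic to the graded matrix ring `M_I(D)(σ̄)`: there is an
injective additive map from `R` to the finitely supported `I×I` matrices over `D`
which respects matrix multiplication and maps the homogeneous component `R_γ` onto
the set of homogeneous matrices of degree `γ`. -/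
def GammaRing.GrRepMatrix {Γ : Type u} {G : Gpd Γ} {R : Type v} {D : Type x}
    [NonUnitalRing R] [NonUnitalRing D] (RG : GammaRing G R) (DG : GammaRing G D)
    {I : Type w} (σ : I → Γ) : Prop :=
  ∃ φ : R →+ (I →₀ I →₀ D), Function.Injective φ ∧
    (∀ (a b : R) (i j : I), φ (a * b) i j = matMulEntry (φ a) (φ b) i j) ∧
    ∀ γ : Γ, (fun r : R => φ r) '' (RG.grade γ : Set R)
      = {m : I →₀ I →₀ D | ∀ i j : I, m i j ∈ entryGrade G DG σ γ i j}

/-- Entry constraint for matrix rings indexed by a sequence of subsets of `Γ`: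
the component `D_{Σ_i γ Σ_j⁻¹}`. -/
def entryGradeSet {Γ : Type u} (G : Gpd Γ) {D : Type v} [NonUnitalRing D]
    (DG : GammaRing G D) {I : Type w} (Sig : I → Set Γ) (γ : Γ) (i j : I) :
    AddSubgroup D :=
  ⨆ (σ : Γ) (_ : σ ∈ Sig i) (τ : Γ) (_ : τ ∈ Sig j), (G.conj? σ γ τ).elim ⊥ DG.grade

/-- `R` is gr-isomorphic to the graded matrix ring `M_I(D)(Σ̄)` for a sequence of
subsets `Σ̄`. -/
def GammaRing.GrRepMatrixSet {Γ : Type u} {G : Gpd Γ} {R : Type v} {D : Type x}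
    [NonUnitalRing R] [NonUnitalRing D] (RG : GammaRing G R) (DG : GammaRing G D)
    {I : Type w} (Sig : I → Set Γ) : Prop :=
  ∃ φ : R →+ (I →₀ I →₀ D), Function.Injective φ ∧
    (∀ (a b : R) (i j : I), φ (a * b) i j = matMulEntry (φ a) (φ b) i j) ∧
    ∀ γ : Γ, (fun r : R => φ r) '' (RG.grade γ : Set R)
      = {m : I →₀ I →₀ D | ∀ i j : I, m i j ∈ entryGradeSet G DG Sig γ i j}

/-- The family of graded rings `Rj` is summable. -/
def SummableFam {Γ : Type u} {G : Gpd Γ} {J : Type w} (Rj : J → BRing.{u, x} G) : Prop :=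
  ∀ e : Γ, G.IsObj e → {j : J | (Rj j).str.grade e ≠ ⊥}.Finite

/-- `P` (with projections `π`) is the graded direct product `∏^gr_j R_j`. -/
def IsGradedProductB {Γ : Type u} {G : Gpd Γ} {J : Type w} (Rj : J → BRing.{u, x} G)
    {P : Type v} [NonUnitalRing P] (PG : GammaRing G P)
    (π : ∀ j, P →+ (Rj j).carrier) : Prop :=
  (∀ (j : J) (a b : P), π j (a * b) = π j a * π j b) ∧
  (∀ (j : J) (e : Γ), G.IsObj e → π j (PG.one e) = (Rj j).str.one e) ∧
  ∀ (γ : Γ) (xs : ∀ j, (Rj j).carrier), (∀ j, xs j ∈ (Rj j).str.grade γ) →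
    ∃! p : P, p ∈ PG.grade γ ∧ ∀ j, π j p = xs j

/-- `R` and `S` are gr-isomorphic graded rings. -/
def GrIso {Γ : Type u} {G : Gpd Γ} {R : Type v} {S : Type x}
    [NonUnitalRing R] [NonUnitalRing S] (RG : GammaRing G R) (SG : GammaRing G S) :
    Prop :=
  ∃ φ : R ≃+ S, (∀ a b : R, φ (a * b) = φ a * φ b) ∧
    (∀ e : Γ, G.IsObj e → φ (RG.one e) = SG.one e) ∧
    ∀ γ : Γ, (fun a : R => φ a) '' (RG.grade γ : Set R) = (SG.grade γ : Set S)

/-- The gr-primality relation: `1_e D 1_f ≠ 0`. -/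
def GrPrimRel {Γ : Type u} (G : Gpd Γ) {D : Type v} [NonUnitalRing D]
    (DG : GammaRing G D) (e f : Γ) : Prop :=
  ∃ x : D, DG.one e * x * DG.one f ≠ 0

/-- The graded ideal `D_{[e]}` attached to the `∼`-class of `e`. -/
def ClassIdeal {Γ : Type u} (G : Gpd Γ) {D : Type v} [NonUnitalRing D]
    (DG : GammaRing G D) (e : Γ) : AddSubgroup D :=
  ⨆ (γ : Γ) (_ : GrPrimRel G DG (G.tgt γ) e ∧ GrPrimRel G DG (G.src γ) e), DG.grade γ

end
universe u v w x y

/-! A homogeneous `g ∈ D_γ` only sees the part `S(d γ)` of `S` and lands in `S(r γ)`. Its kernel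
on `S(d γ)` and its image are graded submodules of the gr-simple modules `S(d γ)` and `S(r γ)`, so
a nonzero `g` restricts to a bijection `S(d γ) → S(r γ)` which shifts degrees by `γ`. Its inverse,
extended by zero off `S(r γ)`, is an inverse of `g` of degree `γ⁻¹`, and it is at the same time a
gr-isomorphism `S(r γ) ≅ S(d γ)(γ⁻¹)`. Conversely a gr-isomorphism `S(e) ≅ S(f)(σ)`, extended by
zero, is a nonzero element of `D_σ`, so `D_{σ⁻¹} ≠ 0` with `σ⁻¹ ∈ eΓf`. For (3), the projections
`1_e` of `S` onto the nonzero `S(e)` are nonzero elements of `D_e`, and `1_e D 1_f ≠ 0` says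
exactly that `D_γ ≠ 0` for some `γ ∈ eΓf`. -/

namespace Gpd

variable {Γ : Type u} (G : Gpd Γ)

theorem comp_congr {γ γ' δ δ' : Γ} (hγ : γ = γ') (hδ : δ = δ') (h : G.src γ = G.tgt δ) :
    G.comp γ δ h = G.comp γ' δ' (hγ ▸ hδ ▸ h) := by
  subst hγ hδ
  rfl

theorem comp_of_isObj_left {e σ : Γ} (he : G.IsObj e) (h : G.src e = G.tgt σ) :
    G.comp e σ h = σ := by
  rw [G.comp_congr (he.symm.trans h) rfl, G.id_comp]

theorem comp_inv_comp (γ δ : Γ) (h : G.tgt γ = G.tgt δ) :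
    G.comp γ (G.comp (G.inv γ) δ ((G.src_inv γ).trans h))
      ((G.tgt_comp _ _ _).trans (G.tgt_inv γ)).symm = δ := by
  rw [← G.comp_assoc _ _ _ (G.tgt_inv γ).symm, G.comp_congr (G.comp_inv γ) rfl,
    G.comp_congr h rfl, G.id_comp]

theorem inv_comp_comp (γ δ : Γ) (h : G.src γ = G.tgt δ) :
    G.comp (G.inv γ) (G.comp γ δ h) ((G.src_inv γ).trans (G.tgt_comp γ δ h).symm) = δ := by
  rw [← G.comp_assoc _ _ _ (G.src_inv γ), G.comp_congr (G.inv_comp γ) rfl,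
    G.comp_congr h rfl, G.id_comp]

theorem comp_left_cancel {γ δ δ' : Γ} (h : G.src γ = G.tgt δ) (h' : G.src γ = G.tgt δ')
    (heq : G.comp γ δ h = G.comp γ δ' h') : δ = δ' := by
  rw [← G.inv_comp_comp γ δ h, ← G.inv_comp_comp γ δ' h']
  exact G.comp_congr rfl heq _

end Gpd

open DirectSum

namespace GammaRing

variable {Γ : Type u} {G : Gpd Γ} {R : Type v} [NonUnitalRing R] (RG : GammaRing G R)

@[elab_as_elim]
theorem induction_on {C : R → Prop} (a : R) (zero : C 0) (add : ∀ a b, C a → C b → C (a + b))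
    (homogeneous : ∀ τ, ∀ a ∈ RG.grade τ, C a) : C a :=
  AddSubgroup.iSup_induction (C := C) RG.grade (RG.grade_iSup ▸ AddSubgroup.mem_top a)
    homogeneous zero add

end GammaRing

namespace GammaMod

variable {Γ : Type u} {G : Gpd Γ} {R : Type v} [NonUnitalRing R] {RG : GammaRing G R}
  {M : Type w} [AddCommGroup M] (Mod : GammaMod RG M)

@[elab_as_elim]
theorem induction_on {C : M → Prop} (m : M) (zero : C 0) (add : ∀ a b, C a → C b → C (a + b))
    (homogeneous : ∀ σ, ∀ m ∈ Mod.grade σ, C m) : C m :=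
  AddSubgroup.iSup_induction (C := C) Mod.grade (Mod.grade_iSup ▸ AddSubgroup.mem_top m)
    homogeneous zero add

theorem zero_smul (a : R) : Mod.smul 0 a = 0 := by
  simpa using Mod.add_smul 0 0 a

theorem smul_zero (m : M) : Mod.smul m 0 = 0 := by
  simpa using Mod.smul_add m 0 0

theorem map_smul_of_homogeneous (φ : M →+ M)
    (h : ∀ σ τ, ∀ m ∈ Mod.grade σ, ∀ a ∈ RG.grade τ, φ (Mod.smul m a) = Mod.smul (φ m) a)
    (m : M) (a : R) : φ (Mod.smul m a) = Mod.smul (φ m) a := by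
  induction m using Mod.induction_on generalizing a with
  | zero => rw [Mod.zero_smul, map_zero, Mod.zero_smul]
  | add x y hx hy => rw [Mod.add_smul, map_add, hx, hy, map_add, Mod.add_smul]
  | homogeneous σ m hm =>
    induction a using RG.induction_on with
    | zero => rw [Mod.smul_zero, map_zero, Mod.smul_zero]
    | add a b ha hb => rw [Mod.smul_add, map_add, ha, hb, Mod.smul_add]
    | homogeneous τ a ha => exact h σ τ m hm a ha

theorem shiftGrade_of_src_eq {σ γ : Γ} (h : G.src σ = G.tgt γ) :
    Mod.shiftGrade σ γ = Mod.grade (G.comp σ γ h) := by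
  simp [shiftGrade, Gpd.mul?, h]

theorem shiftGrade_of_src_ne {σ γ : Γ} (h : G.src σ ≠ G.tgt γ) : Mod.shiftGrade σ γ = ⊥ := by
  simp [shiftGrade, Gpd.mul?, h]

theorem isInternal [DecidableEq Γ] : DirectSum.IsInternal Mod.grade := by
  refine (DirectSum.isInternal_submodule_iff_iSupIndep_and_iSup_eq_top
    fun γ => (Mod.grade γ).toIntSubmodule).2 ⟨?_, ?_⟩
  · exact (iSupIndep_map_orderIso_iff _).2
      (iSupIndep_def.2 fun γ => disjoint_iff.2 (Mod.grade_indep γ))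
  · rw [← AddSubgroup.toIntSubmodule.map_iSup, Mod.grade_iSup, map_top]

noncomputable instance decomposition [DecidableEq Γ] : DirectSum.Decomposition Mod.grade :=
  Mod.isInternal.chooseDecomposition

theorem isGradedSub_of_isHomogeneous [DecidableEq Γ] {N : AddSubgroup M}
    (hsmul : ∀ m ∈ N, ∀ a, Mod.smul m a ∈ N) (hN : SetLike.IsHomogeneous Mod.grade N) :
    Mod.IsGradedSub N := by
  classical
  refine ⟨hsmul, fun m hm => ?_⟩
  rw [← sum_support_decompose Mod.grade m]
  exact sum_mem fun τ _ => AddSubgroup.mem_iSup_of_mem τ ⟨(decompose Mod.grade m τ).2, hN τ hm⟩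

section eComp

theorem grade_le_eComp {γ e : Γ} (h : G.tgt γ = e) : Mod.grade γ ≤ Mod.eComp e :=
  le_iSup₂_of_le (f := fun γ (_ : G.tgt γ = e) => Mod.grade γ) γ h le_rfl

@[elab_as_elim]
theorem eComp_induction {e : Γ} {C : M → Prop} {m : M} (hm : m ∈ Mod.eComp e) (zero : C 0)
    (add : ∀ a b, C a → C b → C (a + b))
    (homogeneous : ∀ σ, G.tgt σ = e → ∀ m ∈ Mod.grade σ, C m) : C m := by
  rw [eComp, iSup_subtype'] at hm
  exact AddSubgroup.iSup_induction (C := C) _ hm (fun σ => homogeneous σ.1 σ.2) zero add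

theorem smul_mem_eComp {e : Γ} {m : M} (hm : m ∈ Mod.eComp e) (a : R) :
    Mod.smul m a ∈ Mod.eComp e := by
  refine Mod.eComp_induction (C := fun m => ∀ a, Mod.smul m a ∈ Mod.eComp e) hm
    (fun a => by simp [Mod.zero_smul])
    (fun x y hx hy a => by simpa [Mod.add_smul] using add_mem (hx a) (hy a)) ?_ a
  intro σ hσ m hm a
  induction a using RG.induction_on with
  | zero => simp [Mod.smul_zero]
  | add a b ha hb => simpa [Mod.smul_add] using add_mem ha hb
  | homogeneous τ a ha =>
    by_cases h : G.src σ = G.tgt τ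
    · exact Mod.grade_le_eComp ((G.tgt_comp σ τ h).trans hσ) (Mod.smul_mem σ τ h m a hm ha)
    · simp [Mod.smul_ne σ τ h m a hm ha]

theorem decompose_eq_zero_of_mem_eComp [DecidableEq Γ] {e τ : Γ} {m : M}
    (hm : m ∈ Mod.eComp e) (h : G.tgt τ ≠ e) : (decompose Mod.grade m τ : M) = 0 := by
  refine Mod.eComp_induction hm (by simp) (fun a b ha hb => by simp [ha, hb]) ?_
  rintro σ hσ m hm
  exact decompose_of_mem_ne _ hm (by rintro rfl; exact h hσ)

theorem isHomogeneous_eComp [DecidableEq Γ] (e : Γ) :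
    SetLike.IsHomogeneous Mod.grade (Mod.eComp e) := by
  intro τ m hm
  by_cases h : G.tgt τ = e
  · exact Mod.grade_le_eComp h (decompose Mod.grade m τ).2
  · rw [Mod.decompose_eq_zero_of_mem_eComp hm h]
    exact zero_mem _

theorem isGradedSub_eComp (e : Γ) : Mod.IsGradedSub (Mod.eComp e) := by
  classical
  exact Mod.isGradedSub_of_isHomogeneous (fun _ hm a => Mod.smul_mem_eComp hm a)
    (Mod.isHomogeneous_eComp e)

open scoped Classical in
noncomputable def eCompProj (e : Γ) : M →+ M :=
  (DirectSum.toAddMonoid fun γ => if G.tgt γ = e then (Mod.grade γ).subtype else 0).comp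
    (decomposeAddEquiv Mod.grade).toAddMonoidHom

open scoped Classical in
theorem eCompProj_of_mem {e γ : Γ} {m : M} (hm : m ∈ Mod.grade γ) :
    Mod.eCompProj e m = if G.tgt γ = e then m else 0 := by
  simp only [eCompProj, AddMonoidHom.coe_comp, Function.comp_apply, AddEquiv.coe_toAddMonoidHom,
    decomposeAddEquiv_apply, decompose_of_mem _ hm, toAddMonoid_of]
  split_ifs <;> rfl

theorem eCompProj_mem (e : Γ) (m : M) : Mod.eCompProj e m ∈ Mod.eComp e := by
  induction m using Mod.induction_on with
  | zero => simp
  | add a b ha hb => simpa using add_mem ha hb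
  | homogeneous σ m hm =>
    rw [Mod.eCompProj_of_mem hm]
    split_ifs with h
    · exact Mod.grade_le_eComp h hm
    · exact zero_mem _

theorem eCompProj_of_mem_eComp {e : Γ} {m : M} (hm : m ∈ Mod.eComp e) :
    Mod.eCompProj e m = m := by
  refine Mod.eComp_induction (C := fun m => Mod.eCompProj e m = m) hm (map_zero _)
    (fun a b ha hb => by rw [map_add, ha, hb]) fun σ hσ m hm => ?_
  rw [Mod.eCompProj_of_mem hm, if_pos hσ]

theorem eCompProj_eq_zero_of_mem_eComp {e e' : Γ} {m : M} (hm : m ∈ Mod.eComp e')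
    (h : e' ≠ e) : Mod.eCompProj e m = 0 := by
  refine Mod.eComp_induction (C := fun m => Mod.eCompProj e m = 0) hm (map_zero _)
    (fun a b ha hb => by rw [map_add, ha, hb, add_zero]) fun σ hσ m hm => ?_
  rw [Mod.eCompProj_of_mem hm, if_neg (hσ ▸ h)]

theorem eq_of_mem_eComp_of_mem_eComp {e f : Γ} {m : M} (he : m ∈ Mod.eComp e)
    (hf : m ∈ Mod.eComp f) (hm : m ≠ 0) : e = f := by
  by_contra h
  exact hm (by rw [← Mod.eCompProj_of_mem_eComp hf, Mod.eCompProj_eq_zero_of_mem_eComp he h])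

theorem eCompProj_smul (e : Γ) (m : M) (a : R) :
    Mod.eCompProj e (Mod.smul m a) = Mod.smul (Mod.eCompProj e m) a := by
  refine Mod.map_smul_of_homogeneous _ (fun σ τ m hm a ha => ?_) m a
  by_cases h : G.src σ = G.tgt τ
  · rw [Mod.eCompProj_of_mem (Mod.smul_mem σ τ h m a hm ha), Mod.eCompProj_of_mem hm,
      G.tgt_comp]
    split_ifs <;> simp [Mod.zero_smul]
  · rw [Mod.smul_ne σ τ h m a hm ha, map_zero, Mod.eCompProj_of_mem hm]
    split_ifs <;> simp [Mod.zero_smul, Mod.smul_ne σ τ h m a hm ha]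

theorem eCompProj_mem_homGrade {e : Γ} (he : G.IsObj e) :
    Mod.eCompProj e ∈ Mod.HomGrade e := by
  refine ⟨Mod.eCompProj_smul e, fun σ m hm => ?_⟩
  rw [Mod.eCompProj_of_mem hm]
  split_ifs with h
  · rw [Mod.shiftGrade_of_src_eq (he.trans h.symm), G.comp_of_isObj_left he]
    exact hm
  · exact zero_mem _

theorem eCompProj_ne_zero {e : Γ} (h : Mod.eComp e ≠ ⊥) : Mod.eCompProj e ≠ 0 := by
  obtain ⟨m, hm, hne⟩ := (Mod.eComp e).bot_or_exists_ne_zero.resolve_left h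
  exact fun h0 => hne (by rw [← Mod.eCompProj_of_mem_eComp hm, h0, AddMonoidHom.zero_apply])

theorem exists_eComp_ne_bot (h : ∃ m : M, m ≠ 0) : ∃ e, G.IsObj e ∧ Mod.eComp e ≠ ⊥ := by
  by_contra! hall
  obtain ⟨m, hm⟩ := h
  refine hm (Mod.induction_on (C := fun m => m = 0) m rfl
    (fun a b ha hb => by rw [ha, hb, add_zero]) fun σ x hx => ?_)
  have := Mod.grade_le_eComp rfl hx
  rwa [hall _ (G.src_tgt σ), AddSubgroup.mem_bot] at this

end eComp

section HomGrade

variable {Mod} {γ : Γ} {g : M →+ M}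

theorem apply_mem_grade (hg : g ∈ Mod.HomGrade γ) {σ : Γ} {m : M} (h : G.src γ = G.tgt σ)
    (hm : m ∈ Mod.grade σ) : g m ∈ Mod.grade (G.comp γ σ h) :=
  Mod.shiftGrade_of_src_eq h ▸ hg.2 σ m hm

theorem apply_eq_zero_of_mem_grade (hg : g ∈ Mod.HomGrade γ) {σ : Γ} {m : M}
    (h : G.src γ ≠ G.tgt σ) (hm : m ∈ Mod.grade σ) : g m = 0 := by
  simpa [Mod.shiftGrade_of_src_ne h] using hg.2 σ m hm

theorem apply_eq_zero_of_mem_eComp (hg : g ∈ Mod.HomGrade γ) {e : Γ} {m : M}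
    (h : G.src γ ≠ e) (hm : m ∈ Mod.eComp e) : g m = 0 :=
  Mod.eComp_induction (C := fun m => g m = 0) hm (map_zero g)
    (fun a b ha hb => by rw [map_add, ha, hb, add_zero])
    fun _ hσ _ hm => apply_eq_zero_of_mem_grade hg (hσ ▸ h) hm

theorem apply_mem_eComp (hg : g ∈ Mod.HomGrade γ) (m : M) : g m ∈ Mod.eComp (G.tgt γ) := by
  induction m using Mod.induction_on with
  | zero => simp
  | add a b ha hb => simpa using add_mem ha hb
  | homogeneous σ m hm =>
    by_cases h : G.src γ = G.tgt σ
    · exact Mod.grade_le_eComp (G.tgt_comp γ σ h) (apply_mem_grade hg h hm)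
    · simp [apply_eq_zero_of_mem_grade hg h hm]

theorem src_eq_of_apply_ne_zero (hg : g ∈ Mod.HomGrade γ) {e : Γ} {m : M}
    (hm : m ∈ Mod.eComp e) (h : g m ≠ 0) : G.src γ = e := by
  by_contra h'
  exact h (apply_eq_zero_of_mem_eComp hg h' hm)

theorem tgt_eq_of_apply_ne_zero (hg : g ∈ Mod.HomGrade γ) {e : Γ} {m : M}
    (hm : g m ∈ Mod.eComp e) (h : g m ≠ 0) : G.tgt γ = e :=
  Mod.eq_of_mem_eComp_of_mem_eComp (apply_mem_eComp hg m) hm h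

theorem eq_zero_of_eComp_src (hg : g ∈ Mod.HomGrade γ)
    (h : ∀ m ∈ Mod.eComp (G.src γ), g m = 0) : g = 0 := by
  ext m
  induction m using Mod.induction_on with
  | zero => simp
  | add a b ha hb => simp_all
  | homogeneous σ m hm =>
    by_cases hσ : G.src γ = G.tgt σ
    · exact h m (Mod.grade_le_eComp hσ.symm hm)
    · exact apply_eq_zero_of_mem_grade hg hσ hm

theorem exists_apply_ne_zero (hg : g ∈ Mod.HomGrade γ) (hne : g ≠ 0) :
    ∃ m ∈ Mod.eComp (G.src γ), g m ≠ 0 := by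
  by_contra! h
  exact hne (eq_zero_of_eComp_src hg h)

theorem eComp_src_ne_bot (hg : g ∈ Mod.HomGrade γ) (hne : g ≠ 0) :
    Mod.eComp (G.src γ) ≠ ⊥ := by
  obtain ⟨m, hm, hgm⟩ := exists_apply_ne_zero hg hne
  intro h
  rw [h, AddSubgroup.mem_bot] at hm
  exact hgm (by rw [hm, map_zero])

theorem eComp_tgt_ne_bot (hg : g ∈ Mod.HomGrade γ) (hne : g ≠ 0) :
    Mod.eComp (G.tgt γ) ≠ ⊥ := by
  obtain ⟨m, -, hgm⟩ := exists_apply_ne_zero hg hne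
  intro h
  have := apply_mem_eComp hg m
  rw [h, AddSubgroup.mem_bot] at this
  exact hgm this

theorem decompose_apply [DecidableEq Γ] (hg : g ∈ Mod.HomGrade γ) {τ : Γ}
    (h : G.src γ = G.tgt τ) (m : M) :
    (decompose Mod.grade (g m) (G.comp γ τ h) : M) = g (decompose Mod.grade m τ) := by
  induction m using Mod.induction_on with
  | zero => simp
  | add a b ha hb => simp [ha, hb]
  | homogeneous σ m hm =>
    by_cases hστ : σ = τ
    · subst hστ
      rw [decompose_of_mem_same _ hm, decompose_of_mem_same _ (apply_mem_grade hg h hm)]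
    rw [decompose_of_mem_ne _ hm hστ, map_zero]
    by_cases hσ : G.src γ = G.tgt σ
    · exact decompose_of_mem_ne _ (apply_mem_grade hg hσ hm)
        fun heq => hστ (G.comp_left_cancel hσ h heq)
    · simp [apply_eq_zero_of_mem_grade hg hσ hm]

theorem isHomogeneous_ker [DecidableEq Γ] (hg : g ∈ Mod.HomGrade γ) :
    SetLike.IsHomogeneous Mod.grade g.ker := by
  intro τ m hm
  rw [AddMonoidHom.mem_ker] at hm ⊢
  by_cases h : G.src γ = G.tgt τ
  · rw [← decompose_apply hg h, hm]
    simp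
  · exact apply_eq_zero_of_mem_grade hg h (decompose Mod.grade m τ).2

theorem isGradedSub_map (hg : g ∈ Mod.HomGrade γ) {N : AddSubgroup M}
    (hN : Mod.IsGradedSub N) : Mod.IsGradedSub (N.map g) := by
  refine ⟨?_, ?_⟩
  · rintro _ ⟨n, hn, rfl⟩ a
    exact ⟨Mod.smul n a, hN.1 n hn a, hg.1 n a⟩
  · rintro _ ⟨n, hn, rfl⟩
    refine AddSubgroup.iSup_induction (C := fun n => g n ∈ ⨆ γ, Mod.grade γ ⊓ N.map g)
      _ (hN.2 hn) (fun σ m hm => ?_) (by simp) (fun a b ha hb => by simpa using add_mem ha hb)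
    by_cases h : G.src γ = G.tgt σ
    · exact AddSubgroup.mem_iSup_of_mem _ ⟨apply_mem_grade hg h hm.1, m, hm.2, rfl⟩
    · simp [apply_eq_zero_of_mem_grade hg h hm.1]

end HomGrade

section Extension

variable {Mod}

noncomputable def extendByZero (e : Γ) (ψ : Mod.eComp e →+ M) : M →+ M :=
  ψ.comp ((Mod.eCompProj e).codRestrict _ (Mod.eCompProj_mem e))

theorem extendByZero_apply_of_mem {e : Γ} (ψ : Mod.eComp e →+ M) {m : M}
    (hm : m ∈ Mod.eComp e) : extendByZero e ψ m = ψ ⟨m, hm⟩ := by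
  simp only [extendByZero, AddMonoidHom.coe_comp, Function.comp_apply,
    AddMonoidHom.codRestrict_apply, Mod.eCompProj_of_mem_eComp hm]

theorem extendByZero_mem_homGrade {e σ : Γ} (ψ : Mod.eComp e →+ M)
    (hlin : ∀ (n : Mod.eComp e) (a : R),
      ψ ⟨Mod.smul n a, Mod.smul_mem_eComp n.2 a⟩ = Mod.smul (ψ n) a)
    (hdeg : ∀ (τ : Γ) (n : Mod.eComp e), (n : M) ∈ Mod.grade τ → ψ n ∈ Mod.shiftGrade σ τ) :
    extendByZero e ψ ∈ Mod.HomGrade σ := by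
  refine ⟨fun m a => ?_, fun τ m hm => ?_⟩
  · simp only [extendByZero, AddMonoidHom.coe_comp, Function.comp_apply,
      AddMonoidHom.codRestrict_apply, Mod.eCompProj_smul]
    exact hlin ⟨_, Mod.eCompProj_mem e m⟩ a
  · by_cases h : G.tgt τ = e
    · rw [extendByZero_apply_of_mem ψ (Mod.grade_le_eComp h hm)]
      exact hdeg τ _ hm
    · have hproj : (Mod.eCompProj e).codRestrict _ (Mod.eCompProj_mem e) m = 0 :=
        Subtype.ext (by classical simp [Mod.eCompProj_of_mem hm, h])
      simp [extendByZero, hproj]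

end Extension

section Schur

variable {Mod} {γ : Γ} {g : M →+ M}

theorem injOn_eComp (hs : Mod.IsGamma0Simple) (hg : g ∈ Mod.HomGrade γ) (hne : g ≠ 0) :
    Set.InjOn g (Mod.eComp (G.src γ)) := by
  classical
  suffices h : ∀ m ∈ Mod.eComp (G.src γ), g m = 0 → m = 0 from
    fun x hx y hy hxy => sub_eq_zero.1 (h _ (sub_mem hx hy) (by rw [map_sub, hxy, sub_self]))
  intro m hm hgm
  set K := Mod.eComp (G.src γ) ⊓ g.ker
  have hK : Mod.IsGradedSub K := Mod.isGradedSub_of_isHomogeneous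
    (fun n hn a => ⟨Mod.smul_mem_eComp hn.1 a, by
      show g _ = 0
      rw [hg.1, show g n = 0 from hn.2, Mod.zero_smul]⟩)
    fun τ n hn => ⟨Mod.isHomogeneous_eComp _ τ hn.1, isHomogeneous_ker hg τ hn.2⟩
  rcases (hs.2 _ (G.src_src γ) (eComp_src_ne_bot hg hne)).2.2 K hK inf_le_left with hK | hK
  · have hmK : m ∈ K := ⟨hm, hgm⟩
    rwa [hK, AddSubgroup.mem_bot] at hmK
  · exact absurd (eq_zero_of_eComp_src hg fun n hn => (hK ▸ hn : n ∈ K).2) hne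

theorem surjOn_eComp (hs : Mod.IsGamma0Simple) (hg : g ∈ Mod.HomGrade γ) (hne : g ≠ 0) :
    ∀ m ∈ Mod.eComp (G.tgt γ), ∃ n ∈ Mod.eComp (G.src γ), g n = m := by
  set N := (Mod.eComp (G.src γ)).map g
  have hN : Mod.IsGradedSub N := isGradedSub_map hg (Mod.isGradedSub_eComp _)
  have hle : N ≤ Mod.eComp (G.tgt γ) := by
    rintro _ ⟨n, -, rfl⟩
    exact apply_mem_eComp hg n
  have hbot : N ≠ ⊥ := by
    obtain ⟨n, hn, hgn⟩ := exists_apply_ne_zero hg hne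
    have hgnN : g n ∈ N := ⟨n, hn, rfl⟩
    exact fun h => hgn (by rwa [h, AddSubgroup.mem_bot] at hgnN)
  rcases (hs.2 _ (G.src_tgt γ) (eComp_tgt_ne_bot hg hne)).2.2 N hN hle with h | h
  · exact absurd h hbot
  · exact fun m hm => (h ▸ hm : m ∈ N)

theorem apply_ne_zero (hs : Mod.IsGamma0Simple) (hg : g ∈ Mod.HomGrade γ) (hne : g ≠ 0)
    {m : M} (hm : m ∈ Mod.eComp (G.src γ)) (h : m ≠ 0) : g m ≠ 0 :=
  fun h0 => h (injOn_eComp hs hg hne hm (zero_mem _) (by rw [h0, map_zero]))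

noncomputable def eCompEquiv (hs : Mod.IsGamma0Simple) (hg : g ∈ Mod.HomGrade γ)
    (hne : g ≠ 0) : Mod.eComp (G.src γ) ≃+ Mod.eComp (G.tgt γ) :=
  AddEquiv.ofBijective
    ((g.comp (Mod.eComp (G.src γ)).subtype).codRestrict _ (fun n => apply_mem_eComp hg n))
    ⟨fun x y hxy => Subtype.ext (injOn_eComp hs hg hne x.2 y.2 (congrArg Subtype.val hxy)),
      fun m => by
        obtain ⟨n, hn, hgn⟩ := surjOn_eComp hs hg hne m m.2
        exact ⟨⟨n, hn⟩, Subtype.ext hgn⟩⟩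

@[simp]
theorem coe_eCompEquiv_apply (hs : Mod.IsGamma0Simple) (hg : g ∈ Mod.HomGrade γ)
    (hne : g ≠ 0) (n : Mod.eComp (G.src γ)) : (eCompEquiv hs hg hne n : M) = g n :=
  rfl

@[simp]
theorem apply_coe_eCompEquiv_symm_apply (hs : Mod.IsGamma0Simple) (hg : g ∈ Mod.HomGrade γ)
    (hne : g ≠ 0) (m : Mod.eComp (G.tgt γ)) : g ((eCompEquiv hs hg hne).symm m) = m := by
  rw [← coe_eCompEquiv_apply hs hg hne, AddEquiv.apply_symm_apply]

theorem eCompEquiv_symm_smul (hs : Mod.IsGamma0Simple) (hg : g ∈ Mod.HomGrade γ)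
    (hne : g ≠ 0) (m : Mod.eComp (G.tgt γ)) (a : R) :
    ((eCompEquiv hs hg hne).symm ⟨Mod.smul m a, Mod.smul_mem_eComp m.2 a⟩ : M)
      = Mod.smul ((eCompEquiv hs hg hne).symm m) a :=
  injOn_eComp hs hg hne (Subtype.prop _) (Mod.smul_mem_eComp (Subtype.prop _) a)
    (by rw [hg.1, apply_coe_eCompEquiv_symm_apply, apply_coe_eCompEquiv_symm_apply])

theorem mem_shiftGrade_inv_iff (hs : Mod.IsGamma0Simple) (hg : g ∈ Mod.HomGrade γ)
    (hne : g ≠ 0) {m : M} (hm : m ∈ Mod.eComp (G.src γ)) {δ : Γ} :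
    m ∈ Mod.shiftGrade (G.inv γ) δ ↔ g m ∈ Mod.grade δ := by
  classical
  by_cases hδ : G.tgt γ = G.tgt δ
  · have h : G.src (G.inv γ) = G.tgt δ := (G.src_inv γ).trans hδ
    rw [Mod.shiftGrade_of_src_eq h]
    constructor
    · intro hm'
      have := apply_mem_grade hg ((G.tgt_comp _ _ h).trans (G.tgt_inv γ)).symm hm'
      rwa [G.comp_inv_comp γ δ hδ] at this
    · intro hgm
      -- the component of `m` of degree `γ⁻¹δ` has the same image `g m` as `m`
      have hproj := decompose_apply hg ((G.tgt_comp _ _ h).trans (G.tgt_inv γ)).symm m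
      rw [G.comp_inv_comp γ δ hδ, decompose_of_mem_same _ hgm] at hproj
      rw [injOn_eComp hs hg hne hm (Mod.isHomogeneous_eComp _ _ hm) hproj]
      exact Subtype.prop _
  · rw [Mod.shiftGrade_of_src_ne ((G.src_inv γ).trans_ne hδ), AddSubgroup.mem_bot]
    constructor
    · rintro rfl
      simp
    · intro hgm
      refine injOn_eComp hs hg hne hm (zero_mem _) ?_
      by_contra h
      exact hδ (Mod.eq_of_mem_eComp_of_mem_eComp (apply_mem_eComp hg m)
        (Mod.grade_le_eComp rfl hgm) (by simpa using h))

noncomputable def inverse (hs : Mod.IsGamma0Simple) (hg : g ∈ Mod.HomGrade γ) (hne : g ≠ 0) :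
    M →+ M :=
  extendByZero (G.tgt γ)
    ((Mod.eComp (G.src γ)).subtype.comp (eCompEquiv hs hg hne).symm.toAddMonoidHom)

theorem inverse_apply_of_mem (hs : Mod.IsGamma0Simple) (hg : g ∈ Mod.HomGrade γ) (hne : g ≠ 0)
    {m : M} (hm : m ∈ Mod.eComp (G.tgt γ)) :
    inverse hs hg hne m = (eCompEquiv hs hg hne).symm ⟨m, hm⟩ :=
  extendByZero_apply_of_mem _ hm

theorem inverse_mem_homGrade (hs : Mod.IsGamma0Simple) (hg : g ∈ Mod.HomGrade γ)
    (hne : g ≠ 0) : inverse hs hg hne ∈ Mod.HomGrade (G.inv γ) := by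
  refine extendByZero_mem_homGrade _ (fun n a => eCompEquiv_symm_smul hs hg hne n a)
    fun τ n hn => (mem_shiftGrade_inv_iff hs hg hne (Subtype.prop _)).2 ?_
  simpa only [AddMonoidHom.coe_comp, Function.comp_apply, AddEquiv.coe_toAddMonoidHom,
    AddSubgroup.coe_subtype, apply_coe_eCompEquiv_symm_apply] using hn

theorem inverse_apply_apply (hs : Mod.IsGamma0Simple) (hg : g ∈ Mod.HomGrade γ) (hne : g ≠ 0)
    {m : M} (hm : m ∈ Mod.eComp (G.src γ)) : inverse hs hg hne (g m) = m := by
  rw [inverse_apply_of_mem hs hg hne (apply_mem_eComp hg m),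
    show (⟨g m, _⟩ : Mod.eComp (G.tgt γ)) = eCompEquiv hs hg hne ⟨m, hm⟩ from rfl,
    AddEquiv.symm_apply_apply]

theorem apply_inverse_apply (hs : Mod.IsGamma0Simple) (hg : g ∈ Mod.HomGrade γ) (hne : g ≠ 0)
    {m : M} (hm : m ∈ Mod.eComp (G.tgt γ)) : g (inverse hs hg hne m) = m := by
  rw [inverse_apply_of_mem hs hg hne hm, apply_coe_eCompEquiv_symm_apply]

theorem inverse_ne_zero (hs : Mod.IsGamma0Simple) (hg : g ∈ Mod.HomGrade γ) (hne : g ≠ 0) :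
    inverse hs hg hne ≠ 0 := by
  obtain ⟨m, hm, hgm⟩ := exists_apply_ne_zero hg hne
  intro h
  have hm0 : m = 0 := by rw [← inverse_apply_apply hs hg hne hm, h, AddMonoidHom.zero_apply]
  exact hgm (by rw [hm0, map_zero])

theorem exists_homGrade_inv (hs : Mod.IsGamma0Simple) (hg : g ∈ Mod.HomGrade γ) (hne : g ≠ 0) :
    ∃ h : M →+ M, h ∈ Mod.HomGrade (G.inv γ) ∧
      (∀ (σ : Γ) (m : M), m ∈ Mod.grade σ →
        (G.tgt σ = G.src γ → h (g m) = m) ∧ (G.tgt σ ≠ G.src γ → h (g m) = 0)) ∧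
      (∀ (σ : Γ) (m : M), m ∈ Mod.grade σ →
        (G.tgt σ = G.tgt γ → g (h m) = m) ∧ (G.tgt σ ≠ G.tgt γ → g (h m) = 0)) := by
  have hinv := inverse_mem_homGrade hs hg hne
  refine ⟨inverse hs hg hne, hinv, fun σ m hm => ⟨fun h => ?_, fun h => ?_⟩,
    fun σ m hm => ⟨fun h => ?_, fun h => ?_⟩⟩
  · exact inverse_apply_apply hs hg hne (Mod.grade_le_eComp h hm)
  · rw [apply_eq_zero_of_mem_grade hg (Ne.symm h) hm, map_zero]
  · exact apply_inverse_apply hs hg hne (Mod.grade_le_eComp h hm)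
  · rw [apply_eq_zero_of_mem_grade hinv ((G.src_inv γ).trans_ne (Ne.symm h)) hm, map_zero]

end Schur

section Isoshift

variable {Mod} {γ : Γ} {g : M →+ M}

theorem subIso_of_homGrade (hs : Mod.IsGamma0Simple) (hg : g ∈ Mod.HomGrade γ) (hne : g ≠ 0) :
    ∃ hN : Mod.IsGradedSub (Mod.eComp (G.tgt γ)),
      Mod.SubIso Mod (Mod.eComp (G.tgt γ)) (Mod.eComp (G.src γ)) hN := by
  refine ⟨Mod.isGradedSub_eComp _, G.inv γ, (eCompEquiv hs hg hne).symm,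
    fun n a => eCompEquiv_symm_smul hs hg hne n a, fun δ => ?_⟩
  ext m
  constructor
  · rintro ⟨n, hn, rfl⟩
    refine ⟨Subtype.prop _, (mem_shiftGrade_inv_iff hs hg hne (Subtype.prop _)).2 ?_⟩
    rwa [apply_coe_eCompEquiv_symm_apply]
  · rintro ⟨hm, hmδ⟩
    exact ⟨eCompEquiv hs hg hne ⟨m, hm⟩, (mem_shiftGrade_inv_iff hs hg hne hm).1 hmδ, by simp⟩

theorem exists_homGrade_of_subIso (hs : Mod.IsGamma0Simple) {e f : Γ} (he : Mod.eComp e ≠ ⊥)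
    (hN : Mod.IsGradedSub (Mod.eComp e))
    (hiso : Mod.SubIso Mod (Mod.eComp e) (Mod.eComp f) hN) :
    ∃ γ : Γ, G.tgt γ = e ∧ G.src γ = f ∧ ∃ g : M →+ M, g ∈ Mod.HomGrade γ ∧ g ≠ 0 := by
  obtain ⟨σ, ψ, hlin, himg⟩ := hiso
  set φ := extendByZero e ((Mod.eComp f).subtype.comp ψ.toAddMonoidHom)
  have hφ : φ ∈ Mod.HomGrade σ := extendByZero_mem_homGrade _ (fun n a => hlin n a)
    fun τ n hn => ((Set.ext_iff.1 (himg τ) _).1 ⟨n, hn, rfl⟩).2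
  obtain ⟨m, hm, hm0⟩ := (Mod.eComp e).bot_or_exists_ne_zero.resolve_left he
  have hφm : φ m = ψ ⟨m, hm⟩ := extendByZero_apply_of_mem _ hm
  have hφm0 : φ m ≠ 0 := by
    rw [hφm, ne_eq, ZeroMemClass.coe_eq_zero, map_eq_zero_iff _ ψ.injective]
    exact fun h => hm0 (congrArg Subtype.val h)
  have hφne : φ ≠ 0 := fun h => hφm0 (by rw [h, AddMonoidHom.zero_apply])
  have hsrc : G.src σ = e := src_eq_of_apply_ne_zero hφ hm hφm0
  have htgt : G.tgt σ = f := tgt_eq_of_apply_ne_zero hφ (hφm ▸ Subtype.prop _) hφm0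
  exact ⟨G.inv σ, (G.tgt_inv σ).trans hsrc, (G.src_inv σ).trans htgt, inverse hs hφ hφne,
    inverse_mem_homGrade hs hφ hφne, inverse_ne_zero hs hφ hφne⟩

theorem exists_homGrade_iff_subIso (hs : Mod.IsGamma0Simple) {e f : Γ}
    (he : Mod.eComp e ≠ ⊥) :
    (∃ γ : Γ, G.tgt γ = e ∧ G.src γ = f ∧ ∃ g : M →+ M, g ∈ Mod.HomGrade γ ∧ g ≠ 0) ↔
      ∃ hN : Mod.IsGradedSub (Mod.eComp e), Mod.SubIso Mod (Mod.eComp e) (Mod.eComp f) hN := by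
  constructor
  · rintro ⟨γ, rfl, rfl, g, hg, hne⟩
    exact subIso_of_homGrade hs hg hne
  · rintro ⟨hN, hiso⟩
    exact exists_homGrade_of_subIso hs he hN hiso

end Isoshift

section Prime

variable {Mod}

theorem tgt_eq_and_src_eq_of_eCompProj_comp_ne_zero {e f ε : Γ} {k : M →+ M}
    (hk : k ∈ Mod.HomGrade ε) (h : (Mod.eCompProj e).comp (k.comp (Mod.eCompProj f)) ≠ 0) :
    G.tgt ε = e ∧ G.src ε = f := by
  obtain ⟨m, hm⟩ := DFunLike.ne_iff.1 h
  set x := Mod.eCompProj f m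
  have hkx : k x ≠ 0 := fun h0 => hm (by simp [x, h0])
  refine ⟨?_, src_eq_of_apply_ne_zero hk (Mod.eCompProj_mem f m) hkx⟩
  by_contra hε
  exact hm (by simp [x, Mod.eCompProj_eq_zero_of_mem_eComp (apply_mem_eComp hk x) hε])

theorem comp_comp_ne_zero (hs : Mod.IsGamma0Simple) {γ δ ε : Γ} {g h k : M →+ M}
    (hg : g ∈ Mod.HomGrade γ) (hgne : g ≠ 0) (hk : k ∈ Mod.HomGrade ε) (hkne : k ≠ 0)
    (hh : h ∈ Mod.HomGrade δ) (hhne : h ≠ 0) (hεγ : G.tgt ε = G.src γ)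
    (hεδ : G.src ε = G.tgt δ) : g.comp (k.comp h) ≠ 0 := by
  obtain ⟨m, -, hhm⟩ := exists_apply_ne_zero hh hhne
  have hkhm := apply_ne_zero hs hk hkne (hεδ ▸ apply_mem_eComp hh m) hhm
  have hgkhm := apply_ne_zero hs hg hgne (hεγ ▸ apply_mem_eComp hk _) hkhm
  exact fun h0 => hgkhm (by simpa using DFunLike.congr_fun h0 m)

end Prime

end GammaMod

/-- graded Schur's Lemma.  Let `S` be a `Γ₀`-simple graded right
module over the object unital `Γ`-graded ring `R`, and let `D := END_R(S)` (whose
homogeneous component of degree `γ` is `Mod.HomGrade γ`).  Then: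
(1) `D` is a gr-division ring (it is nonzero, and every nonzero homogeneous
    `g ∈ D_γ` has an inverse `h ∈ D_{γ⁻¹}` with `g ∘ h = 𝟙_{r(γ)}` and
    `h ∘ g = 𝟙_{d(γ)}`);
(2) for objects `e, f` with `S(e) ≠ 0 ≠ S(f)`, there is `γ ∈ eΓf` with `D_γ ≠ 0`
    iff `S(e)` and `S(f)` are in the same isoshift class;
(3) `D` is gr-prime (equivalently: `D ≠ 0` and `gDh ≠ 0` for all nonzero
    homogeneous `g, h ∈ D`) iff all the nonzero `S(e)` lie in a single isoshift
    class. -/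
theorem graded_schur_lemma
    {Γ : Type u} (G : Gpd Γ) {R : Type v} [NonUnitalRing R] (RG : GammaRing G R)
    {M : Type w} [AddCommGroup M] (Mod : GammaMod RG M) (hs : Mod.IsGamma0Simple) :
    -- (1)
    ((∃ (γ : Γ) (g : M →+ M), g ∈ Mod.HomGrade γ ∧ g ≠ 0) ∧
     (∀ (γ : Γ) (g : M →+ M), g ∈ Mod.HomGrade γ → g ≠ 0 →
       ∃ h : M →+ M, h ∈ Mod.HomGrade (G.inv γ) ∧
         (∀ (σ : Γ) (m : M), m ∈ Mod.grade σ →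
           (G.tgt σ = G.src γ → h (g m) = m) ∧ (G.tgt σ ≠ G.src γ → h (g m) = 0)) ∧
         (∀ (σ : Γ) (m : M), m ∈ Mod.grade σ →
           (G.tgt σ = G.tgt γ → g (h m) = m) ∧ (G.tgt σ ≠ G.tgt γ → g (h m) = 0)))) ∧
    -- (2)
    (∀ e f : Γ, G.IsObj e → G.IsObj f → Mod.eComp e ≠ ⊥ → Mod.eComp f ≠ ⊥ →
      ((∃ γ : Γ, G.tgt γ = e ∧ G.src γ = f ∧ ∃ g : M →+ M, g ∈ Mod.HomGrade γ ∧ g ≠ 0) ↔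
        ∃ hN : Mod.IsGradedSub (Mod.eComp e),
          Mod.SubIso Mod (Mod.eComp e) (Mod.eComp f) hN)) ∧
    -- (3)
    (((∃ (γ : Γ) (g : M →+ M), g ∈ Mod.HomGrade γ ∧ g ≠ 0) ∧
      ∀ (γ δ : Γ) (g h : M →+ M), g ∈ Mod.HomGrade γ → g ≠ 0 →
        h ∈ Mod.HomGrade δ → h ≠ 0 →
        ∃ (ε : Γ) (k : M →+ M), k ∈ Mod.HomGrade ε ∧ g.comp (k.comp h) ≠ 0) ↔
      ∀ e f : Γ, G.IsObj e → G.IsObj f → Mod.eComp e ≠ ⊥ → Mod.eComp f ≠ ⊥ →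
        ∃ hN : Mod.IsGradedSub (Mod.eComp e),
          Mod.SubIso Mod (Mod.eComp e) (Mod.eComp f) hN) := by
  have hD : ∃ (γ : Γ) (g : M →+ M), g ∈ Mod.HomGrade γ ∧ g ≠ 0 := by
    obtain ⟨e, he, hne⟩ := Mod.exists_eComp_ne_bot hs.1
    exact ⟨e, _, Mod.eCompProj_mem_homGrade he, Mod.eCompProj_ne_zero hne⟩
  refine ⟨⟨hD, fun γ g hg hne => GammaMod.exists_homGrade_inv hs hg hne⟩,
    fun e f _ _ he _ => GammaMod.exists_homGrade_iff_subIso hs he, ⟨?_, fun hall => ⟨hD, ?_⟩⟩⟩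
  · rintro ⟨-, hprime⟩ e f he hf hee hff
    obtain ⟨ε, k, hk, hne⟩ := hprime e f _ _ (Mod.eCompProj_mem_homGrade he)
      (Mod.eCompProj_ne_zero hee) (Mod.eCompProj_mem_homGrade hf) (Mod.eCompProj_ne_zero hff)
    obtain ⟨rfl, rfl⟩ := GammaMod.tgt_eq_and_src_eq_of_eCompProj_comp_ne_zero hk hne
    exact GammaMod.subIso_of_homGrade hs hk fun h0 => hne (by simp [h0])
  · intro γ δ g h hg hgne hh hhne
    have hsrc := GammaMod.eComp_src_ne_bot hg hgne
    obtain ⟨hN, hiso⟩ := hall _ _ (G.src_src γ) (G.src_tgt δ) hsrc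
      (GammaMod.eComp_tgt_ne_bot hh hhne)
    obtain ⟨ε, hεγ, hεδ, k, hk, hkne⟩ := GammaMod.exists_homGrade_of_subIso hs hsrc hN hiso
    exact ⟨ε, k, hk, GammaMod.comp_comp_ne_zero hs hg hgne hk hkne hh hhne hεγ hεδ⟩
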